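/- Let E be a homogeneous Moran set determined by a collection of closed intervals fulfilling the homogeneous Moran structure for the sequences {n_k} and {c_k}. Then for every x ∈ E and all integers k ≥ 1 and l ≥ 1, N_{δ_{k+l}}(B(x,δ_k) ∩ E) ≤ 4·n_{k+1}n_{k+2}⋯n_{k+l+1}. -/

import Mathlib

open Metric Filter Set
open scoped ENNReal

/-- `coveringNumber r A` is the smallest number of balls of radius `r`
needed to cover `A` (as an extended nonnegative real, `⊤` if no finite cover exists). -/
noncomputable def coveringNumber {X : Type*} [MetricSpace X] (r : ℝ) (A : Set X) : ℝ≥0∞ :=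
  sInf {m : ℝ≥0∞ | ∃ S : Finset X, (S.card : ℝ≥0∞) = m ∧ A ⊆ ⋃ y ∈ S, Metric.ball y r}

/-- A word `σ = σ₁σ₂⋯σₖ ∈ Ωₖ`: its `j`-th letter (0-indexed `j`) satisfies
`1 ≤ σⱼ₊₁ ≤ n (j+1)`. -/
def MoranWord (n : ℕ → ℕ) (σ : List ℕ) : Prop :=
  ∀ j, j < σ.length → 1 ≤ σ.getD j 0 ∧ σ.getD j 0 ≤ n (j + 1)

/-- A collection of closed intervals of `[0,1]` fulfilling the homogeneous Moran
structure for the sequences `{nₖ}` and `{cₖ}`. -/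
structure HomMoranStructure (n : ℕ → ℕ) (c : ℕ → ℝ) where
  I : List ℕ → Set ℝ
  root : I [] = Set.Icc 0 1
  isClosedInterval : ∀ σ, MoranWord n σ → ∃ x y : ℝ, x ≤ y ∧ I σ = Set.Icc x y
  subset : ∀ σ, MoranWord n σ → ∀ i, 1 ≤ i → i ≤ n (σ.length + 1) → I (σ ++ [i]) ⊆ I σ
  disj : ∀ σ, MoranWord n σ → ∀ i₁ i₂, 1 ≤ i₁ → i₁ < i₂ → i₂ ≤ n (σ.length + 1) →
    interior (I (σ ++ [i₁])) ∩ interior (I (σ ++ [i₂])) = ∅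
  ratio : ∀ σ, MoranWord n σ → ∀ i, 1 ≤ i → i ≤ n (σ.length + 1) →
    Metric.diam (I (σ ++ [i])) = c (σ.length + 1) * Metric.diam (I σ)

/-- The homogeneous Moran set `E = ⋂_{k≥1} ⋃_{σ∈Ωₖ} I_σ` determined by a
homogeneous Moran structure. -/
def moranSet {n : ℕ → ℕ} {c : ℕ → ℝ} (S : HomMoranStructure n c) : Set ℝ :=
  ⋂ k : ℕ, ⋃ σ : List ℕ, ⋃ _ : MoranWord n σ ∧ σ.length = k + 1, S.I σ

/-- `moranDelta c k = c₁c₂⋯cₖ`, with `moranDelta c 0 = 1`. -/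
noncomputable def moranDelta (c : ℕ → ℝ) (k : ℕ) : ℝ :=
  ∏ i ∈ Finset.Icc 1 k, c i

namespace HomMoranAux

variable {n : ℕ → ℕ} {c : ℕ → ℝ}

lemma moranDelta_succ (c : ℕ → ℝ) (m : ℕ) :
    moranDelta c (m + 1) = moranDelta c m * c (m + 1) := by
  unfold moranDelta
  rw [Finset.prod_Icc_succ_top (by omega)]

lemma moranDelta_pos (hc : ∀ k, 1 ≤ k → 0 < c k) (m : ℕ) : 0 < moranDelta c m :=
  Finset.prod_pos (fun i hi => hc i (Finset.mem_Icc.mp hi).1)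

lemma getD_take (l : List ℕ) (m j : ℕ) (hj : j < m) (h2 : j < l.length) :
    (l.take m).getD j 0 = l.getD j 0 := by
  rw [List.getD_eq_getElem _ _ (by simp; omega), List.getD_eq_getElem _ _ h2]
  simp [List.getElem_take]

lemma moranWord_take {τ : List ℕ} (h : MoranWord n τ) (m : ℕ) : MoranWord n (τ.take m) := by
  intro j hj
  simp only [List.length_take, lt_min_iff] at hj
  rw [getD_take _ _ _ hj.1 hj.2]
  exact h j hj.2

lemma moranWord_append {σ : List ℕ} {i : ℕ} (h : MoranWord n (σ ++ [i])) :
    MoranWord n σ ∧ 1 ≤ i ∧ i ≤ n (σ.length + 1) := by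
  refine ⟨fun j hj => ?_, ?_⟩
  · have := h j (by simp; omega)
    rwa [List.getD_append _ _ _ _ hj] at this
  · have := h σ.length (by simp)
    simpa [List.getD_append_right] using this

lemma I_diam (S : HomMoranStructure n c) : ∀ σ : List ℕ, MoranWord n σ →
    Metric.diam (S.I σ) = moranDelta c σ.length := by
  intro σ
  induction σ using List.reverseRecOn with
  | nil =>
    intro _
    simp [S.root, Real.diam_Icc (by norm_num : (0:ℝ) ≤ 1), moranDelta]
  | append_singleton σ i ih =>
    intro h
    obtain ⟨h1, h2, h3⟩ := moranWord_append h
    rw [S.ratio σ h1 i h2 h3, ih h1]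
    simp [List.length_append, moranDelta_succ, mul_comm]

lemma I_eq (S : HomMoranStructure n c) {σ : List ℕ} (h : MoranWord n σ) :
    S.I σ = Set.Icc (sInf (S.I σ)) (sInf (S.I σ) + moranDelta c σ.length) := by
  obtain ⟨a, b, hab, hI⟩ := S.isClosedInterval σ h
  have hd := I_diam S σ h
  rw [hI, Real.diam_Icc hab] at hd
  rw [hI, csInf_Icc hab]
  have : b = a + moranDelta c σ.length := by linarith
  rw [this]

lemma I_mono (S : HomMoranStructure n c) (σ : List ℕ) :
    ∀ ρ : List ℕ, MoranWord n (σ ++ ρ) → S.I (σ ++ ρ) ⊆ S.I σ := by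
  intro ρ
  induction ρ using List.reverseRecOn with
  | nil => intro _; simp
  | append_singleton ρ i ih =>
    intro h
    rw [← List.append_assoc] at h ⊢
    obtain ⟨h1, h2, h3⟩ := moranWord_append h
    exact (S.subset _ h1 i h2 h3).trans (ih h1)

lemma list_decomp (σ : List ℕ) (m : ℕ) (h : σ.length = m + 1) :
    σ = σ.take m ++ [σ.getD m 0] := by
  conv_lhs => rw [← List.take_append_drop m σ]
  congr 1
  rw [List.drop_eq_getElem_cons (by omega), List.getD_eq_getElem _ _ (by omega),
      List.drop_eq_nil_of_le (by omega)]

lemma I_disj (S : HomMoranStructure n c) :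
    ∀ m : ℕ, ∀ σ σ' : List ℕ, MoranWord n σ → MoranWord n σ' →
      σ.length = m → σ'.length = m → σ ≠ σ' →
      interior (S.I σ) ∩ interior (S.I σ') = ∅ := by
  intro m
  induction m with
  | zero =>
    intro σ σ' _ _ h1 h2 hne
    exact absurd ((List.length_eq_zero_iff.mp h1).trans (List.length_eq_zero_iff.mp h2).symm) hne
  | succ m ih =>
    intro σ σ' hσ hσ' hl hl' hne
    have hdσ := list_decomp σ m hl
    have hdσ' := list_decomp σ' m hl'
    have hα : MoranWord n (σ.take m) := moranWord_take hσ m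
    have hα' : MoranWord n (σ'.take m) := moranWord_take hσ' m
    have hαl : (σ.take m).length = m := by rw [List.length_take]; omega
    have hα'l : (σ'.take m).length = m := by rw [List.length_take]; omega
    have hi := hσ m (by omega)
    have hi' := hσ' m (by omega)
    by_cases hab : σ.take m = σ'.take m
    · have hii : σ.getD m 0 ≠ σ'.getD m 0 := by
        intro hcon
        exact hne (by rw [hdσ, hdσ', hab, hcon])
      rcases lt_or_gt_of_ne hii with hlt | hlt
      · have hd := S.disj (σ.take m) hα _ _ hi.1 hlt (by rw [hαl]; exact hi'.2)
        rw [hdσ, hdσ', ← hab]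
        exact hd
      · have hd := S.disj (σ.take m) hα _ _ hi'.1 hlt (by rw [hαl]; exact hi.2)
        rw [hdσ, hdσ', ← hab, Set.inter_comm]
        exact hd
    · have hdisj := ih (σ.take m) (σ'.take m) hα hα' hαl hα'l hab
      have s1 : S.I σ ⊆ S.I (σ.take m) := by
        nth_rewrite 1 [hdσ]
        exact S.subset _ hα _ hi.1 (by rw [hαl]; exact hi.2)
      have s2 : S.I σ' ⊆ S.I (σ'.take m) := by
        nth_rewrite 1 [hdσ']
        exact S.subset _ hα' _ hi'.1 (by rw [hα'l]; exact hi'.2)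
      have hsub : interior (S.I σ) ∩ interior (S.I σ') ⊆
          interior (S.I (σ.take m)) ∩ interior (S.I (σ'.take m)) :=
        Set.inter_subset_inter (interior_mono s1) (interior_mono s2)
      exact Set.subset_empty_iff.mp (hdisj ▸ hsub)

end HomMoranAux

open HomMoranAux

/-- For a homogeneous Moran set `E`: for every `x ∈ E` and `k, l ≥ 1`,
`N_{δ_{k+l}}(B(x,δ_k) ∩ E) ≤ 4·n_{k+1}⋯n_{k+l+1}`. -/
theorem homMoran_coveringNumber_upper' (n : ℕ → ℕ) (c : ℕ → ℝ)
    (hn : ∀ k, 1 ≤ k → 2 ≤ n k) (hc : ∀ k, 1 ≤ k → 0 < c k)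
    (hnc : ∀ k, 1 ≤ k → (n k : ℝ) * c k < 1)
    (S : HomMoranStructure n c) (E : Set ℝ) (hE : E = moranSet S) :
    ∀ x ∈ E, ∀ k l : ℕ, 1 ≤ k → 1 ≤ l →
      coveringNumber (moranDelta c (k + l)) (Metric.ball x (moranDelta c k) ∩ E) ≤
        ((4 * ∏ i ∈ Finset.Icc (k + 1) (k + l + 1), n i : ℕ) : ℝ≥0∞) := by
  classical
  intro x hx k l hk hl
  set δk := moranDelta c k with hδkdef
  set δ := moranDelta c (k + l) with hδdef
  have hδkpos : 0 < δk := moranDelta_pos hc k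
  have hδpos : 0 < δ := moranDelta_pos hc (k + l)
  have hclt : ∀ m, 1 ≤ m → c m < 1 := by
    intro m hm
    have h2 : (2 : ℝ) ≤ n m := by exact_mod_cast hn m hm
    have h3 := hnc m hm
    nlinarith [hc m hm]
  have hsucclt : moranDelta c (k + l + 1) < δ := by
    rw [moranDelta_succ]
    nlinarith [hclt (k + l + 1) (by omega), hc (k + l + 1) (by omega), hδpos]
  -- relevant words of length k+l+1
  set W : Set (List ℕ) := {τ | MoranWord n τ ∧ τ.length = k + l + 1 ∧
      (S.I (List.take k τ) ∩ Metric.ball x δk).Nonempty} with hWdef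
  have htakelen : ∀ τ : List ℕ, τ.length = k + l + 1 → (List.take k τ).length = k := by
    intro τ hτ; rw [List.length_take]; omega
  -- the left endpoint of the level-k ancestor of any τ ∈ W lies in (x-2δk, x+δk)
  have hA : ∀ τ ∈ W, sInf (S.I (List.take k τ)) ∈ Set.Ioo (x - 2 * δk) (x + δk) := by
    rintro τ ⟨hmw, hlen, p, hp1, hp2⟩
    have hmwt := moranWord_take hmw k
    have hIcc := I_eq S hmwt
    rw [htakelen τ hlen] at hIcc
    rw [hIcc] at hp1
    rw [Metric.mem_ball, Real.dist_eq] at hp2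
    have habs := abs_lt.mp hp2
    exact ⟨by linarith [hp1.2, habs.1], by linarith [hp1.1, habs.2]⟩
  -- distinct level-k ancestors have δk-separated left endpoints
  have hsep : ∀ τ ∈ W, ∀ τ' ∈ W, List.take k τ ≠ List.take k τ' →
      δk ≤ |sInf (S.I (List.take k τ)) - sInf (S.I (List.take k τ'))| := by
    rintro τ ⟨hmw, hlen, -⟩ τ' ⟨hmw', hlen', -⟩ hne
    have h1 := moranWord_take hmw k
    have h2 := moranWord_take hmw' k
    have hd := I_disj S k _ _ h1 h2 (htakelen τ hlen) (htakelen τ' hlen') hne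
    set a := sInf (S.I (List.take k τ)) with hadef
    set b := sInf (S.I (List.take k τ')) with hbdef
    have hI1 : S.I (List.take k τ) = Set.Icc a (a + δk) := by
      have := I_eq S h1; rwa [htakelen τ hlen] at this
    have hI2 : S.I (List.take k τ') = Set.Icc b (b + δk) := by
      have := I_eq S h2; rwa [htakelen τ' hlen'] at this
    by_contra hcon
    push_neg at hcon
    have habs := abs_sub_lt_iff.mp hcon
    rw [Set.eq_empty_iff_forall_notMem] at hd
    rcases le_total a b with hab | hab
    · refine hd ((b + (a + δk)) / 2) ⟨?_, ?_⟩
      · rw [hI1, interior_Icc]; exact ⟨by linarith [habs.1], by linarith [habs.1]⟩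
      · rw [hI2, interior_Icc]; exact ⟨by linarith [habs.1], by linarith [habs.1]⟩
    · refine hd ((a + (b + δk)) / 2) ⟨?_, ?_⟩
      · rw [hI1, interior_Icc]; exact ⟨by linarith [habs.2], by linarith [habs.2]⟩
      · rw [hI2, interior_Icc]; exact ⟨by linarith [habs.2], by linarith [habs.2]⟩
  -- the clamped floor map
  set g : ℝ → ℕ := fun a => min 2 (⌊(a - (x - 2 * δk)) / δk⌋).toNat with hgdef
  have hglt : ∀ a : ℝ, g a < 3 := by
    intro a; simp only [hgdef]; omega
  have hg : ∀ a ∈ Set.Ioo (x - 2 * δk) (x + δk), ∀ b ∈ Set.Ioo (x - 2 * δk) (x + δk),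
      g a = g b → |a - b| < δk := by
    intro a ha b hb hab
    simp only [hgdef] at hab
    have hva0 : (0:ℝ) ≤ (a - (x - 2 * δk)) / δk := le_of_lt (div_pos (by linarith [ha.1]) hδkpos)
    have hvb0 : (0:ℝ) ≤ (b - (x - 2 * δk)) / δk := le_of_lt (div_pos (by linarith [hb.1]) hδkpos)
    have hva3 : (a - (x - 2 * δk)) / δk < 3 := (div_lt_iff₀ hδkpos).mpr (by linarith [ha.2])
    have hvb3 : (b - (x - 2 * δk)) / δk < 3 := (div_lt_iff₀ hδkpos).mpr (by linarith [hb.2])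
    have hfa0 : 0 ≤ ⌊(a - (x - 2 * δk)) / δk⌋ := Int.floor_nonneg.mpr hva0
    have hfb0 : 0 ≤ ⌊(b - (x - 2 * δk)) / δk⌋ := Int.floor_nonneg.mpr hvb0
    have hfa3 : ⌊(a - (x - 2 * δk)) / δk⌋ < 3 := Int.floor_lt.mpr (by exact_mod_cast hva3)
    have hfb3 : ⌊(b - (x - 2 * δk)) / δk⌋ < 3 := Int.floor_lt.mpr (by exact_mod_cast hvb3)
    have hfeq : ⌊(a - (x - 2 * δk)) / δk⌋ = ⌊(b - (x - 2 * δk)) / δk⌋ := by omega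
    have l1 : (↑⌊(a - (x - 2 * δk)) / δk⌋ : ℝ) ≤ (a - (x - 2 * δk)) / δk := Int.floor_le _
    have l2 : (a - (x - 2 * δk)) / δk < ⌊(a - (x - 2 * δk)) / δk⌋ + 1 := Int.lt_floor_add_one _
    have l3 : (↑⌊(b - (x - 2 * δk)) / δk⌋ : ℝ) ≤ (b - (x - 2 * δk)) / δk := Int.floor_le _
    have l4 : (b - (x - 2 * δk)) / δk < ⌊(b - (x - 2 * δk)) / δk⌋ + 1 := Int.lt_floor_add_one _
    have hfeqR : ((⌊(a - (x - 2 * δk)) / δk⌋ : ℝ)) = ((⌊(b - (x - 2 * δk)) / δk⌋ : ℝ)) := by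
      exact_mod_cast hfeq
    have hd1 : (a - (x - 2 * δk)) / δk - (b - (x - 2 * δk)) / δk < 1 := by linarith
    have hd2 : (b - (x - 2 * δk)) / δk - (a - (x - 2 * δk)) / δk < 1 := by linarith
    have ea : (a - (x - 2 * δk)) / δk * δk = a - (x - 2 * δk) := div_mul_cancel₀ _ (ne_of_gt hδkpos)
    have eb : (b - (x - 2 * δk)) / δk * δk = b - (x - 2 * δk) := div_mul_cancel₀ _ (ne_of_gt hδkpos)
    rw [abs_sub_lt_iff]
    constructor
    · nlinarith [mul_lt_mul_of_pos_right hd1 hδkpos]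
    · nlinarith [mul_lt_mul_of_pos_right hd2 hδkpos]
  -- letters of words in W
  have hnbd : ∀ τ ∈ W, ∀ j : Fin (l + 1),
      1 ≤ τ.getD (k + j) 0 ∧ τ.getD (k + j) 0 ≤ n (k + j + 1) := by
    rintro τ ⟨hmw, hlen, -⟩ j
    exact hmw (k + j) (by have := j.isLt; omega)
  -- the injection
  set F : W → Fin 3 × (∀ j : Fin (l + 1), Fin (n (k + j + 1))) := fun τ =>
    (⟨g (sInf (S.I (List.take k τ.1))), hglt _⟩,
     fun j => ⟨τ.1.getD (k + j) 0 - 1, by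
       have h := hnbd τ.1 τ.2 j
       omega⟩) with hFdef
  have hFinj : Function.Injective F := by
    rintro ⟨τ, hτ⟩ ⟨τ', hτ'⟩ heq
    simp only [hFdef, Prod.mk.injEq, Fin.mk.injEq] at heq
    obtain ⟨h1, h2⟩ := heq
    have hlen : τ.length = k + l + 1 := hτ.2.1
    have hlen' : τ'.length = k + l + 1 := hτ'.2.1
    have hprefix : List.take k τ = List.take k τ' := by
      by_contra hne
      have h3 := hsep τ hτ τ' hτ' hne
      have h4 := hg _ (hA τ hτ) _ (hA τ' hτ') h1
      linarith
    have hsuffix : ∀ j, k ≤ j → j < k + l + 1 → τ.getD j 0 = τ'.getD j 0 := by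
      intro j hj1 hj2
      have h5 := congrFun h2 ⟨j - k, by omega⟩
      simp only [Fin.mk.injEq] at h5
      have hkj : k + (j - k) = j := by omega
      rw [hkj] at h5
      have hb1 := hτ.1 j (by omega)
      have hb2 := hτ'.1 j (by omega)
      omega
    apply Subtype.ext
    show τ = τ'
    apply List.ext_getElem (by omega)
    intro i hi1 hi2
    rcases lt_or_ge i k with hik | hik
    · have e1 : τ.getD i 0 = (List.take k τ).getD i 0 := (getD_take τ k i hik (by omega)).symm
      have e2 : τ'.getD i 0 = (List.take k τ').getD i 0 := (getD_take τ' k i hik (by omega)).symm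
      have e3 := e1.trans (by rw [hprefix, ← e2])
      rwa [List.getD_eq_getElem _ _ hi1, List.getD_eq_getElem _ _ hi2] at e3
    · have e3 := hsuffix i hik (by omega)
      rwa [List.getD_eq_getElem _ _ hi1, List.getD_eq_getElem _ _ hi2] at e3
  haveI : Finite W := Finite.of_injective F hFinj
  have hWfin : W.Finite := Set.toFinite W
  have hcardW : hWfin.toFinset.card ≤ 3 * ∏ i ∈ Finset.Icc (k + 1) (k + l + 1), n i := by
    have h1 := Nat.card_le_card_of_injective F hFinj
    have h2 : Nat.card (Fin 3 × (∀ j : Fin (l + 1), Fin (n (k + j + 1)))) =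
        3 * ∏ j : Fin (l + 1), n (k + j + 1) := by
      simp [Nat.card_prod, Nat.card_pi]
    have h3 : ∏ j : Fin (l + 1), n (k + j + 1) = ∏ i ∈ Finset.Icc (k + 1) (k + l + 1), n i := by
      rw [← Finset.Ico_add_one_right_eq_Icc, Finset.prod_Ico_eq_prod_range]
      have h4 : k + l + 1 + 1 - (k + 1) = l + 1 := by omega
      rw [h4, Fin.prod_univ_eq_prod_range (fun j => n (k + j + 1)) (l + 1)]
      exact Finset.prod_congr rfl (fun i _ => by congr 1; omega)
    have h5 : Nat.card W = hWfin.toFinset.card := by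
      rw [Nat.card_coe_set_eq, Set.ncard_eq_toFinset_card W hWfin]
    rw [h2, h3, h5] at h1
    exact h1
  set T : Finset ℝ := hWfin.toFinset.image (fun τ => sInf (S.I τ)) with hTdef
  have hcover : Metric.ball x δk ∩ E ⊆ ⋃ y ∈ T, Metric.ball y δ := by
    rintro y ⟨hyb, hyE⟩
    rw [hE] at hyE
    have hy2 := Set.mem_iInter.mp hyE (k + l)
    simp only [Set.mem_iUnion] at hy2
    obtain ⟨τ, ⟨hmw, hlen⟩, hyτ⟩ := hy2
    have hsubpre : S.I τ ⊆ S.I (List.take k τ) := by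
      have hdec : List.take k τ ++ List.drop k τ = τ := List.take_append_drop k τ
      have hmono := I_mono S (List.take k τ) (List.drop k τ) (by rw [hdec]; exact hmw)
      rwa [hdec] at hmono
    have hτW : τ ∈ W := ⟨hmw, hlen, y, hsubpre hyτ, hyb⟩
    have hIτ : S.I τ = Set.Icc (sInf (S.I τ)) (sInf (S.I τ) + moranDelta c (k + l + 1)) := by
      have := I_eq S hmw; rwa [hlen] at this
    rw [hIτ] at hyτ
    refine Set.mem_iUnion₂.mpr ⟨sInf (S.I τ),
      Finset.mem_image.mpr ⟨τ, hWfin.mem_toFinset.mpr hτW, rfl⟩, ?_⟩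
    rw [Metric.mem_ball, Real.dist_eq, abs_lt]
    exact ⟨by linarith [hyτ.1, hδpos], by linarith [hyτ.2, hsucclt]⟩
  have hmem : ((T.card : ℝ≥0∞)) ∈ {m : ℝ≥0∞ | ∃ Sf : Finset ℝ,
      (Sf.card : ℝ≥0∞) = m ∧ Metric.ball x δk ∩ E ⊆ ⋃ y ∈ Sf, Metric.ball y δ} :=
    ⟨T, rfl, hcover⟩
  have hT4 : T.card ≤ 4 * ∏ i ∈ Finset.Icc (k + 1) (k + l + 1), n i := by
    have hTle : T.card ≤ hWfin.toFinset.card := Finset.card_image_le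
    omega
  refine le_trans ?_ (by exact_mod_cast Nat.cast_le.mpr hT4 :
    ((T.card : ℝ≥0∞)) ≤ ((4 * ∏ i ∈ Finset.Icc (k + 1) (k + l + 1), n i : ℕ) : ℝ≥0∞))
  unfold _root_.coveringNumber
  exact sInf_le hmem
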